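/- arXiv:2209.06655 — 2 statements merged into one kernel-verified Lean document; each statement's English description precedes it below -/
import Mathlib

section
/- Every quantifier-free L_WSO-formula is equivalent, in every model of Th(WSO(𝕀)), to a positive existential L_WSO-formula. -/
namespace MCpaper

open FirstOrder Language Structure Set

/-- `𝕀`: a dense linear order with a least element `0` and no greatest element,
concretely the nonnegative rationals. -/
abbrev II : Type := NNRat

/-! ### Set-level operations associated to a linear order -/

section SetOps

variable {α : Type*} [LinearOrder α]

/-- The singleton of the least element of `A` (as a set; empty if `A` has no least element). -/
def minSet (A : Set α) : Set α := {i ∈ A | ∀ j ∈ A, i ≤ j}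

/-- The singleton of the greatest element of `A` (as a set; empty if `A` has no greatest
element). -/
def maxSet (A : Set α) : Set α := {i ∈ A | ∀ j ∈ A, j ≤ i}

/-- `sInvSet A B = {i ∈ A : i has a successor in the suborder A and that successor lies in B}`. -/
def sInvSet (A B : Set α) : Set α :=
  {i ∈ A | ∃ j ∈ A, i < j ∧ (∀ k ∈ A, i < k → j ≤ k) ∧ j ∈ B}

lemma minSet_subset (A : Set α) : minSet A ⊆ A := sep_subset _ _

lemma minSet_subsingleton (A : Set α) : (minSet A).Subsingleton :=
  fun x hx y hy => le_antisymm (hx.2 y hy.1) (hy.2 x hx.1)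

lemma maxSet_subsingleton (A : Set α) : (maxSet A).Subsingleton :=
  fun x hx y hy => le_antisymm (hy.2 x hx.1) (hx.2 y hy.1)
lemma maxSet_subset (A : Set α) : maxSet A ⊆ A := sep_subset _ _
lemma sInvSet_subset (A B : Set α) : sInvSet A B ⊆ A := sep_subset _ _

end SetOps

/-! ### The languages -/

/-- Relation symbols of `L_MO = {⊆, ∃<}`. -/
inductive MORel : ℕ → Type
  | sub : MORel 2
  | elt : MORel 2

/-- The language `L_MO = {⊆, ∃<}` with two binary relation symbols. -/
def LMO : Language := ⟨fun _ => Empty, MORel⟩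

/-- Function symbols of `L_WSO`. -/
inductive WSOFunc : ℕ → Type
  | union : WSOFunc 2
  | inter : WSOFunc 2
  | bot : WSOFunc 0
  | zero : WSOFunc 0
  | min : WSOFunc 1
  | max : WSOFunc 1
  | sinv : WSOFunc 2

/-- The language `L_WSO = {∪, ∩, ⊥, 𝟎, min, max, 𝔰⁻¹}`. -/
def LWSO : Language := ⟨WSOFunc, fun _ => Empty⟩

/-- Function symbols of `L_MSOFin`. -/
inductive MSOFinFunc : ℕ → Type
  | union : MSOFinFunc 2
  | inter : MSOFinFunc 2
  | bot : MSOFinFunc 0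
  | zero : MSOFinFunc 0
  | zeroStar : MSOFinFunc 0
  | sinv : MSOFinFunc 1

/-- The language `L_MSOFin = {∪, ∩, ⊥, 𝟎, 𝟎*, s⁻¹}`. -/
def LMSOFin : Language := ⟨MSOFinFunc, fun _ => Empty⟩

/-- Function symbols of `L_L`. -/
inductive LLFunc : ℕ → Type
  | union : LLFunc 2
  | inter : LLFunc 2
  | bot : LLFunc 0
  | zero : LLFunc 0
  | min : LLFunc 1
  | max : LLFunc 1
  | left : LLFunc 1
  | right : LLFunc 1

/-- The language `L_L = {∪, ∩, ⊥, 𝟎, min, max, l, r}`. -/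
def LL : Language := ⟨LLFunc, fun _ => Empty⟩

/-! ### `WSO(𝕀)` as an `L_WSO`-structure and as an `L_MO`-structure -/

/-- The universe of `WSO(𝕀)`: finite subsets of `𝕀`. -/
abbrev FinSub : Type := {A : Set II // A.Finite}

/-- `WSO(𝕀)` as an `L_WSO`-structure. -/
instance finSubLWSO : LWSO.Structure FinSub where
  funMap {n} f :=
    match f with
    | .union => fun v => ⟨(v 0).1 ∪ (v 1).1, (v 0).2.union (v 1).2⟩
    | .inter => fun v => ⟨(v 0).1 ∩ (v 1).1, (v 0).2.inter_of_left _⟩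
    | .bot => fun _ => ⟨∅, finite_empty⟩
    | .zero => fun _ => ⟨{0}, finite_singleton _⟩
    | .min => fun v => ⟨minSet (v 0).1, (v 0).2.subset (minSet_subset _)⟩
    | .max => fun v => ⟨maxSet (v 0).1, (v 0).2.subset (maxSet_subset _)⟩
    | .sinv => fun v => ⟨sInvSet (v 0).1 (v 1).1, (v 0).2.subset (sInvSet_subset _ _)⟩
  RelMap {n} r := Empty.elim r

/-- `WSO(α)` as an `L_MO`-structure, for any linearly ordered `α` (here specialised to `𝕀`). -/
instance finSubLMO : LMO.Structure FinSub where
  funMap {n} f := Empty.elim f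
  RelMap {n} r :=
    match r with
    | .sub => fun v => (v 0).1 ⊆ (v 1).1
    | .elt => fun v => ∃ a ∈ (v 0).1, ∃ b ∈ (v 1).1, a < b

/-- `MSO(α)`: the `L_MO`-structure on the full powerset of a linear order `α`. -/
instance powersetLMO (α : Type*) [LinearOrder α] : LMO.Structure (Set α) where
  funMap {n} f := Empty.elim f
  RelMap {n} r :=
    match r with
    | .sub => fun v => v 0 ⊆ v 1
    | .elt => fun v => ∃ a ∈ v 0, ∃ b ∈ v 1, a < b

/-! ### `MSO(n)` and the pseudofinite theory `T_MSOFin` -/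

/-- `MSO(n)` as an `L_MSOFin`-structure on the powerset of `{0, …, n-1}`. -/
instance msoFinStructure (n : ℕ) : LMSOFin.Structure (Set (Fin n)) where
  funMap {m} f :=
    match f with
    | .union => fun v => v 0 ∪ v 1
    | .inter => fun v => v 0 ∩ v 1
    | .bot => fun _ => ∅
    | .zero => fun _ => {i : Fin n | (i : ℕ) = 0}
    | .zeroStar => fun _ => {i : Fin n | (i : ℕ) = n - 1}
    | .sinv => fun v => {i : Fin n | ∃ j : Fin n, (j : ℕ) = (i : ℕ) + 1 ∧ j ∈ v 0}
  RelMap {m} r := Empty.elim r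

/-- The pseudofinite monadic second order theory of linear order: the set of `L_MSOFin`-sentences
true in `MSO(n)` for every `n`. -/
def TMSOFin : LMSOFin.Theory := {φ : LMSOFin.Sentence | ∀ n : ℕ, Set (Fin n) ⊨ φ}

/-! ### Abstract `L_MO`-structures: atoms and interval restrictions -/

section LMOAbstract

variable {M : Type*} [LMO.Structure M]

/-- The interpretation of `⊆` in an `L_MO`-structure. -/
def mSub (a b : M) : Prop := RelMap (L := LMO) MORel.sub ![a, b]

/-- The interpretation of `∃<` in an `L_MO`-structure. -/
def mLt (a b : M) : Prop := RelMap (L := LMO) MORel.elt ![a, b]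

/-- `b` is the least element of the partial order `(M, ⊆)`. -/
def IsBotM (b : M) : Prop := ∀ x : M, mSub b x

/-- `a` is an atom of `(M, ⊆)`: a minimal element strictly above the least element. -/
def IsAtomM (a : M) : Prop :=
  ∃ b : M, IsBotM b ∧ a ≠ b ∧ ∀ x : M, mSub x a → x = a ∨ x = b

/-- The carrier `{B : M ∣ every atom X ⊆ B satisfies (i ∃< X ∨ X = i) ∧ X ∃< j}`
of the restriction `M ↾ [i,j)`. -/
def intervalRes (i j : M) : Set M :=
  {B : M | ∀ X : M, IsAtomM X → mSub X B → (mLt i X ∨ X = i) ∧ mLt X j}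

/-- The `L_MO`-structure induced on a subset of an `L_MO`-structure. -/
def inducedLMO (s : Set M) : LMO.Structure s where
  funMap {n} f := Empty.elim f
  RelMap {n} r v := RelMap (M := M) r fun k => (v k : M)

end LMOAbstract

/-! ### Abstract `L_WSO`-structures, restrictions to elements -/

section LWSOAbstract

variable {M : Type*} [LWSO.Structure M]

/-- The interpretation of `∪` in an `L_WSO`-structure. -/
def wUnion (a b : M) : M := funMap (L := LWSO) WSOFunc.union ![a, b]

/-- The interpretation of `∩` in an `L_WSO`-structure. -/
def wInter (a b : M) : M := funMap (L := LWSO) WSOFunc.inter ![a, b]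

/-- The interpretation of `⊥` in an `L_WSO`-structure. -/
def wBot : M := funMap (L := LWSO) (M := M) WSOFunc.bot ![]

/-- The interpretation of `𝟎` in an `L_WSO`-structure. -/
def wZero : M := funMap (L := LWSO) (M := M) WSOFunc.zero ![]

/-- The interpretation of `min` in an `L_WSO`-structure. -/
def wMin (a : M) : M := funMap (L := LWSO) WSOFunc.min ![a]

/-- The interpretation of `max` in an `L_WSO`-structure. -/
def wMax (a : M) : M := funMap (L := LWSO) WSOFunc.max ![a]

/-- The interpretation of `𝔰⁻¹` in an `L_WSO`-structure. -/
def wSInv (a b : M) : M := funMap (L := LWSO) WSOFunc.sinv ![a, b]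

variable (M)

/-- The universe `{B : M ∣ B ∩ A = B}` of the restriction `M ↾ A`. -/
def Res (A : M) : Type _ := {B : M // wInter B A = B}

/-- The (true in every model of `Th(WSO(𝕀))`) closure conditions saying that
`{B : M ∣ B ∩ A = B}` is closed under the operations of the restricted structure `M ↾ A`. -/
structure ResClosed (A : M) : Prop where
  union : ∀ B C : M, wInter B A = B → wInter C A = C → wInter (wUnion B C) A = wUnion B C
  inter : ∀ B C : M, wInter B A = B → wInter C A = C → wInter (wInter B C) A = wInter B C
  bot : wInter (wBot : M) A = wBot
  zero : wInter (wMin A) A = wMin A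
  zeroStar : wInter (wMax A) A = wMax A
  sinv : ∀ B : M, wInter B A = B → wInter (wSInv A B) A = wSInv A B

variable {M}

/-- The restriction `M ↾ A` as an `L_MSOFin`-structure: `∪`, `∩`, `⊥` are inherited from `M`,
`𝟎` is `min(A)`, `𝟎*` is `max(A)`, and `s⁻¹` is `B ↦ 𝔰⁻¹(A, B)` computed in `M`. -/
def resStructure {A : M} (hc : ResClosed M A) : LMSOFin.Structure (Res M A) where
  funMap {m} f :=
    match f with
    | .union => fun v => ⟨wUnion (v 0).1 (v 1).1, hc.union _ _ (v 0).2 (v 1).2⟩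
    | .inter => fun v => ⟨wInter (v 0).1 (v 1).1, hc.inter _ _ (v 0).2 (v 1).2⟩
    | .bot => fun _ => ⟨wBot, hc.bot⟩
    | .zero => fun _ => ⟨wMin A, hc.zero⟩
    | .zeroStar => fun _ => ⟨wMax A, hc.zeroStar⟩
    | .sinv => fun v => ⟨wSInv A (v 0).1, hc.sinv _ (v 0).2⟩
  RelMap {m} r := Empty.elim r

/-- `⌊Ā⌋ = 𝟎 ∪ A₁ ∪ … ∪ Aₙ`, computed in `M`. -/
def wFloor {n : ℕ} (A : Fin n → M) : M := (List.ofFn A).foldl wUnion wZero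

end LWSOAbstract

/-! ### Complexity classes of formulas -/

section Complexity

variable {L : Language} {α : Type*}

/-- Positive existential formulas: those built from atomic formulas using only `∧`, `∨`
and `∃`. -/
inductive IsPosEx : {n : ℕ} → L.BoundedFormula α n → Prop
  | equal {n} (t₁ t₂ : L.Term (α ⊕ Fin n)) : IsPosEx (BoundedFormula.equal t₁ t₂)
  | rel {n k} (R : L.Relations k) (ts : Fin k → L.Term (α ⊕ Fin n)) :
      IsPosEx (BoundedFormula.rel R ts)
  | inf {n} {φ ψ : L.BoundedFormula α n} : IsPosEx φ → IsPosEx ψ → IsPosEx (φ ⊓ ψ)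
  | sup {n} {φ ψ : L.BoundedFormula α n} : IsPosEx φ → IsPosEx ψ → IsPosEx (φ ⊔ ψ)
  | ex {n} {φ : L.BoundedFormula α (n + 1)} : IsPosEx φ → IsPosEx φ.ex

/-- Existential formulas: a block of existential quantifiers applied to a
quantifier-free formula. -/
inductive IsExist : {n : ℕ} → L.BoundedFormula α n → Prop
  | of_isQF {n} {φ : L.BoundedFormula α n} : φ.IsQF → IsExist φ
  | ex {n} {φ : L.BoundedFormula α (n + 1)} : IsExist φ → IsExist φ.ex

end Complexity

/-! ### Finite unions of closed intervals and the structure `L(𝕀)` -/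

/-- `A` is a finite union of closed intervals of `𝕀` (each of the form `[i,j]` or `[i,∞)`;
intervals of the form `(-∞, j]` coincide with `[0, j]` since `𝕀` has least element `0`). -/
def IsFCI (A : Set II) : Prop :=
  ∃ (k : ℕ) (f : Fin k → Set II),
    (∀ m : Fin k, (∃ i j : II, f m = Set.Icc i j) ∨ ∃ i : II, f m = Set.Ici i) ∧ A = ⋃ m, f m

/-- The universe of `L(𝕀)`: finite unions of closed intervals of `𝕀`. -/
abbrev FCI : Type := {A : Set II // IsFCI A}

/-- The set of left endpoints of `A`. -/
def lSet (A : Set II) : Set II := {i ∈ A | i = 0 ∨ ∃ i' < i, Set.Ioo i' i ∩ A = ∅}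

/-- The set of right endpoints of `A`. -/
def rSet (A : Set II) : Set II := {i ∈ A | ∃ i'', i < i'' ∧ Set.Ioo i i'' ∩ A = ∅}

lemma isFCI_empty : IsFCI (∅ : Set II) := ⟨0, Fin.elim0, fun m => m.elim0, by simp⟩

lemma isFCI_singleton (i : II) : IsFCI {i} :=
  ⟨1, fun _ => Set.Icc i i, fun _ => Or.inl ⟨i, i, rfl⟩, by simp⟩

lemma IsFCI.union {A B : Set II} (hA : IsFCI A) (hB : IsFCI B) : IsFCI (A ∪ B) := by
  obtain ⟨k, f, hf, rfl⟩ := hA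
  obtain ⟨l, g, hg, rfl⟩ := hB
  refine ⟨k + l, fun m => Sum.elim f g (finSumFinEquiv.symm m), fun m => ?_, ?_⟩
  · dsimp only
    rcases finSumFinEquiv.symm m with i | j
    · exact hf i
    · exact hg j
  · ext x
    simp only [Set.mem_union, Set.mem_iUnion]
    constructor
    · rintro (⟨i, hi⟩ | ⟨j, hj⟩)
      · exact ⟨finSumFinEquiv (Sum.inl i), by simpa using hi⟩
      · exact ⟨finSumFinEquiv (Sum.inr j), by simpa using hj⟩
    · rintro ⟨m, hm⟩
      rcases h : finSumFinEquiv.symm m with i | j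
      · rw [h] at hm; exact Or.inl ⟨i, hm⟩
      · rw [h] at hm; exact Or.inr ⟨j, hm⟩

lemma Icc_inter_Ici' {a b c : II} : Set.Icc a b ∩ Set.Ici c = Set.Icc (a ⊔ c) b := by
  ext x
  simp only [Set.mem_inter_iff, Set.mem_Icc, Set.mem_Ici, sup_le_iff]
  tauto

lemma IsFCI.inter {A B : Set II} (hA : IsFCI A) (hB : IsFCI B) : IsFCI (A ∩ B) := by
  obtain ⟨k, f, hf, rfl⟩ := hA
  obtain ⟨l, g, hg, rfl⟩ := hB
  refine ⟨k * l, fun m => f (finProdFinEquiv.symm m).1 ∩ g (finProdFinEquiv.symm m).2,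
    fun m => ?_, ?_⟩
  · dsimp only
    rcases hf (finProdFinEquiv.symm m).1 with ⟨a, b, hab⟩ | ⟨a, ha⟩ <;>
      rcases hg (finProdFinEquiv.symm m).2 with ⟨c, d, hcd⟩ | ⟨c, hc⟩
    · exact Or.inl ⟨a ⊔ c, b ⊓ d, by rw [hab, hcd, Set.Icc_inter_Icc]⟩
    · exact Or.inl ⟨a ⊔ c, b, by rw [hab, hc, Icc_inter_Ici']⟩
    · exact Or.inl ⟨c ⊔ a, d, by rw [ha, hcd, Set.inter_comm, Icc_inter_Ici']⟩
    · exact Or.inr ⟨a ⊔ c, by rw [ha, hc, Set.Ici_inter_Ici]⟩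
  · ext x
    simp only [Set.mem_inter_iff, Set.mem_iUnion]
    constructor
    · rintro ⟨⟨i, hi⟩, ⟨j, hj⟩⟩
      exact ⟨finProdFinEquiv (i, j), by simpa using ⟨hi, hj⟩⟩
    · rintro ⟨m, hm⟩
      exact ⟨⟨_, hm.1⟩, ⟨_, hm.2⟩⟩

lemma isFCI_minSet (A : Set II) : IsFCI (minSet A) := by
  rcases (minSet_subsingleton A).eq_empty_or_singleton with h | ⟨i, h⟩
  · rw [h]; exact isFCI_empty
  · rw [h]; exact isFCI_singleton i

lemma isFCI_maxSet (A : Set II) : IsFCI (maxSet A) := by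
  rcases (maxSet_subsingleton A).eq_empty_or_singleton with h | ⟨i, h⟩
  · rw [h]; exact isFCI_empty
  · rw [h]; exact isFCI_singleton i

lemma finite_isFCI {A : Set II} (hA : A.Finite) : IsFCI A :=
  Set.Finite.induction_on _ hA isFCI_empty
    (fun _ _ ih => by rw [Set.insert_eq]; exact (isFCI_singleton _).union ih)

lemma IsFCI.lSet_finite {A : Set II} (hA : IsFCI A) : (lSet A).Finite := by
  obtain ⟨k, f, hf, rfl⟩ := hA
  have hsub : lSet (⋃ m, f m) ⊆ {0} ∪ ⋃ m, minSet (f m) := by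
    rintro i ⟨hiA, hi⟩
    rcases hi with rfl | ⟨i', hi'lt, hgap⟩
    · exact Set.mem_union_left _ rfl
    · obtain ⟨m, him⟩ := Set.mem_iUnion.1 hiA
      refine Set.mem_union_right _ (Set.mem_iUnion.2 ⟨m, him, fun j hj => ?_⟩)
      by_contra hji
      push_neg at hji
      obtain ⟨x, hx1, hx2⟩ := exists_between (max_lt hi'lt hji : max i' j < i)
      have hxfm : x ∈ f m := by
        rcases hf m with ⟨a, b, hab⟩ | ⟨a, ha⟩
        · rw [hab] at him hj ⊢
          exact ⟨hj.1.trans ((le_max_right i' j).trans hx1.le), hx2.le.trans him.2⟩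
        · rw [ha] at hj ⊢
          exact hj.trans ((le_max_right i' j).trans hx1.le)
      have hmem : x ∈ Set.Ioo i' i ∩ ⋃ m, f m :=
        ⟨⟨(le_max_left i' j).trans_lt hx1, hx2⟩, Set.mem_iUnion.2 ⟨m, hxfm⟩⟩
      rw [hgap] at hmem
      exact hmem
  exact ((Set.finite_singleton 0).union
    (Set.finite_iUnion fun m => (minSet_subsingleton (f m)).finite)).subset hsub

lemma IsFCI.rSet_finite {A : Set II} (hA : IsFCI A) : (rSet A).Finite := by
  obtain ⟨k, f, hf, rfl⟩ := hA
  have hsub : rSet (⋃ m, f m) ⊆ ⋃ m, maxSet (f m) := by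
    rintro i ⟨hiA, i'', hi''gt, hgap⟩
    obtain ⟨m, him⟩ := Set.mem_iUnion.1 hiA
    refine Set.mem_iUnion.2 ⟨m, him, fun j hj => ?_⟩
    by_contra hij
    push_neg at hij
    obtain ⟨x, hx1, hx2⟩ := exists_between (lt_min hi''gt hij : i < min i'' j)
    have hxfm : x ∈ f m := by
      rcases hf m with ⟨a, b, hab⟩ | ⟨a, ha⟩
      · rw [hab] at him hj ⊢
        exact ⟨him.1.trans hx1.le, (hx2.le.trans (min_le_right i'' j)).trans hj.2⟩
      · rw [ha] at him ⊢
        exact him.trans hx1.le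
    have hmem : x ∈ Set.Ioo i i'' ∩ ⋃ m, f m :=
      ⟨⟨hx1, hx2.trans_le (min_le_left i'' j)⟩, Set.mem_iUnion.2 ⟨m, hxfm⟩⟩
    rw [hgap] at hmem
    exact hmem
  exact (Set.finite_iUnion fun m => (maxSet_subsingleton (f m)).finite).subset hsub

/-- `L(𝕀)` as an `L_L`-structure. -/
instance fciLL : LL.Structure FCI where
  funMap {m} f :=
    match f with
    | .union => fun v => ⟨(v 0).1 ∪ (v 1).1, (v 0).2.union (v 1).2⟩
    | .inter => fun v => ⟨(v 0).1 ∩ (v 1).1, (v 0).2.inter (v 1).2⟩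
    | .bot => fun _ => ⟨∅, isFCI_empty⟩
    | .zero => fun _ => ⟨{0}, isFCI_singleton 0⟩
    | .min => fun v => ⟨minSet (v 0).1, isFCI_minSet _⟩
    | .max => fun v => ⟨maxSet (v 0).1, isFCI_maxSet _⟩
    | .left => fun v => ⟨lSet (v 0).1, finite_isFCI (v 0).2.lSet_finite⟩
    | .right => fun v => ⟨rSet (v 0).1, finite_isFCI (v 0).2.rSet_finite⟩
  RelMap {m} r := Empty.elim r

universe u v

/-!
A quantifier-free formula is a Boolean combination of equations, so after pushing negations
to the atoms it is a positive combination of equations and inequations. In `WSO(𝕀)` an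
inequation `t₁ ≠ t₂` is positive existential: it holds iff some nonempty `x` lies inside
`t₁ ∪ t₂` and misses `t₁ ∩ t₂`, and nonemptiness of `x` is the equation
`(x ∪ 𝔰⁻¹(𝟎 ∪ x, x)) ∩ 𝟎 = 𝟎`. The resulting equivalence holds in `WSO(𝕀)` for all
valuations, hence, as a universal sentence of `Th(WSO(𝕀))`, in each of its models.
-/

section PosExDefinable

open BoundedFormula

variable {L : Language} {α : Type*} {k : ℕ} (N : Type*) [L.Structure N]

def PosExDefinable (φ : L.BoundedFormula α k) : Prop :=
  ∃ ψ : L.BoundedFormula α k, IsPosEx ψ ∧ ∀ v xs, φ.Realize (M := N) v xs ↔ ψ.Realize v xs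

variable {N}

lemma PosExDefinable.sup {φ₁ φ₂ : L.BoundedFormula α k} (h₁ : PosExDefinable N φ₁)
    (h₂ : PosExDefinable N φ₂) : PosExDefinable N (φ₁ ⊔ φ₂) := by
  obtain ⟨ψ₁, hψ₁, e₁⟩ := h₁
  obtain ⟨ψ₂, hψ₂, e₂⟩ := h₂
  exact ⟨ψ₁ ⊔ ψ₂, hψ₁.sup hψ₂, fun v xs => by simp only [realize_sup, e₁, e₂]⟩

lemma PosExDefinable.inf {φ₁ φ₂ : L.BoundedFormula α k} (h₁ : PosExDefinable N φ₁)
    (h₂ : PosExDefinable N φ₂) : PosExDefinable N (φ₁ ⊓ φ₂) := by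
  obtain ⟨ψ₁, hψ₁, e₁⟩ := h₁
  obtain ⟨ψ₂, hψ₂, e₂⟩ := h₂
  exact ⟨ψ₁ ⊓ ψ₂, hψ₁.inf hψ₂, fun v xs => by simp only [realize_inf, e₁, e₂]⟩

lemma PosExDefinable.congr {φ φ' : L.BoundedFormula α k} (h : PosExDefinable N φ)
    (e : ∀ v xs, φ.Realize (M := N) v xs ↔ φ'.Realize v xs) : PosExDefinable N φ' := by
  obtain ⟨ψ, hψ, e'⟩ := h
  exact ⟨ψ, hψ, fun v xs => (e v xs).symm.trans (e' v xs)⟩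

lemma posExDefinable_of_isAtomic {φ : L.BoundedFormula α k} (h : φ.IsAtomic) :
    PosExDefinable N φ := by
  refine ⟨φ, ?_, fun _ _ => Iff.rfl⟩
  cases h with
  | equal t₁ t₂ => exact IsPosEx.equal t₁ t₂
  | rel R ts => exact IsPosEx.rel R ts

lemma posExDefinable_and_not_of_isQF (hbot : PosExDefinable N (⊥ : L.BoundedFormula α k))
    (htop : PosExDefinable N (⊤ : L.BoundedFormula α k))
    (hneg : ∀ φ : L.BoundedFormula α k, φ.IsAtomic → PosExDefinable N φ.not)
    {φ : L.BoundedFormula α k} (hφ : φ.IsQF) :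
    PosExDefinable N φ ∧ PosExDefinable N φ.not := by
  induction hφ with
  | falsum => exact ⟨hbot, htop⟩
  | of_isAtomic h => exact ⟨posExDefinable_of_isAtomic h, hneg _ h⟩
  | imp _ _ ih₁ ih₂ =>
    refine ⟨(ih₁.2.sup ih₂.1).congr fun v xs => ?_, (ih₁.1.inf ih₂.2).congr fun v xs => ?_⟩
    · simp only [realize_sup, realize_not, realize_imp]
      tauto
    · simp only [realize_inf, realize_not, realize_imp]
      tauto

end PosExDefinable

lemma realize_iff_realize_of_model_completeTheory {L : Language} {N : Type*} [L.Structure N]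
    {β : Type*} [Finite β] {φ ψ : L.Formula β} (h : ∀ v : β → N, φ.Realize v ↔ ψ.Realize v)
    (M : Type*) [L.Structure M] [M ⊨ L.completeTheory N] (v : β → M) :
    φ.Realize v ↔ ψ.Realize v := by
  let σ : L.Sentence := ((φ.iff ψ).relabel (Sum.inr : β → Empty ⊕ β)).iAlls β
  have hN : N ⊨ σ := by simpa [σ, Sentence.Realize] using h
  have hM : M ⊨ σ := (realize_iff_of_model_completeTheory N M σ).2 hN
  simp only [σ, Sentence.Realize, Formula.realize_iAlls, Formula.realize_relabel,
    Formula.realize_iff] at hM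
  exact hM v

lemma ne_iff_exists_mem_union_notMem_inter {α : Type*} (A B : Set α) :
    A ≠ B ↔ ∃ x ∈ A ∪ B, x ∉ A ∩ B := by
  rw [← symmDiff_nonempty, symmDiff_eq_sup_sdiff_inf]
  rfl

section SetLemmas

variable {α : Type*} [LinearOrder α] {A : Set α}

lemma mem_sInvSet_insert_iff (hA : A.Finite) (a : α) :
    a ∈ sInvSet (insert a A) A ↔ ∃ x ∈ A, a < x := by
  refine ⟨fun ⟨_, j, _, haj, _, hjA⟩ => ⟨j, hjA, haj⟩, fun ⟨x, hxA, hax⟩ => ?_⟩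
  obtain ⟨d, ⟨hdA, had⟩, hd⟩ :=
    Set.exists_min_image {x ∈ A | a < x} id (hA.subset (sep_subset _ _)) ⟨x, hxA, hax⟩
  refine ⟨mem_insert a A, d, mem_insert_of_mem a hdA, had, fun y hy hay => ?_, hdA⟩
  rcases hy with rfl | hyA
  · exact absurd hay (lt_irrefl y)
  · exact hd y ⟨hyA, hay⟩

lemma nonempty_iff_mem_union_sInvSet_insert (hA : A.Finite) {a : α} (ha : a ∈ lowerBounds A) :
    A.Nonempty ↔ a ∈ A ∪ sInvSet (insert a A) A := by
  rw [mem_union, mem_sInvSet_insert_iff hA]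
  constructor
  · rintro ⟨x, hx⟩
    rcases (ha hx).eq_or_lt with rfl | hax
    exacts [Or.inl hx, Or.inr ⟨x, hx, hax⟩]
  · rintro (h | ⟨x, hx, -⟩)
    exacts [⟨a, h⟩, ⟨x, hx⟩]

end SetLemmas

section WSOFormulas

open BoundedFormula

variable {β α : Type*} {k : ℕ}

def tUnion (t u : LWSO.Term β) : LWSO.Term β := Term.func WSOFunc.union ![t, u]

def tInter (t u : LWSO.Term β) : LWSO.Term β := Term.func WSOFunc.inter ![t, u]

def tSInv (t u : LWSO.Term β) : LWSO.Term β := Term.func WSOFunc.sinv ![t, u]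

def tZero : LWSO.Term β := Term.func WSOFunc.zero ![]

def tBot : LWSO.Term β := Term.func WSOFunc.bot ![]

@[simp] lemma realize_tUnion (v : β → FinSub) (t u : LWSO.Term β) :
    ((tUnion t u).realize v).1 = (t.realize v).1 ∪ (u.realize v).1 := rfl

@[simp] lemma realize_tInter (v : β → FinSub) (t u : LWSO.Term β) :
    ((tInter t u).realize v).1 = (t.realize v).1 ∩ (u.realize v).1 := rfl

@[simp] lemma realize_tSInv (v : β → FinSub) (t u : LWSO.Term β) :
    ((tSInv t u).realize v).1 = sInvSet (t.realize v).1 (u.realize v).1 := rfl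

@[simp] lemma realize_tZero (v : β → FinSub) : ((tZero : LWSO.Term β).realize v).1 = {0} := rfl

@[simp] lemma realize_tBot (v : β → FinSub) : ((tBot : LWSO.Term β).realize v).1 = ∅ := rfl

/-- If `0 ∉ t ≠ ∅`, then `0 ∈ 𝔰⁻¹(𝟎 ∪ t, t)`, the successor of `0` in `𝟎 ∪ t` being `min t`. -/
def nonemptyFormula (t : LWSO.Term (α ⊕ Fin k)) : LWSO.BoundedFormula α k :=
  Term.bdEqual (tInter (tUnion t (tSInv (tUnion tZero t) t)) tZero) tZero

lemma isPosEx_nonemptyFormula (t : LWSO.Term (α ⊕ Fin k)) : IsPosEx (nonemptyFormula t) :=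
  IsPosEx.equal _ _

lemma realize_nonemptyFormula (t : LWSO.Term (α ⊕ Fin k)) (v : α → FinSub)
    (xs : Fin k → FinSub) :
    (nonemptyFormula t).Realize v xs ↔ (t.realize (Sum.elim v xs)).1.Nonempty := by
  rw [nonempty_iff_mem_union_sInvSet_insert (t.realize (Sum.elim v xs)).2
    fun _ _ => zero_le]
  simp only [nonemptyFormula, realize_bdEqual, Subtype.ext_iff, realize_tInter, realize_tUnion,
    realize_tSInv, realize_tZero, inter_eq_right, singleton_subset_iff, singleton_union]

/-- `∃ x ≠ ⊥, x ⊆ t₁ ∪ t₂ ∧ x ∩ (t₁ ∩ t₂) = ⊥`, with `t₁, t₂` lifted past the new bound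
variable `x`. -/
def neFormula (t₁ t₂ : LWSO.Term (α ⊕ Fin k)) : LWSO.BoundedFormula α k :=
  let x : LWSO.Term (α ⊕ Fin (k + 1)) := Term.var (Sum.inr (Fin.last k))
  let t₁' := t₁.relabel (Sum.map id Fin.castSucc)
  let t₂' := t₂.relabel (Sum.map id Fin.castSucc)
  (nonemptyFormula x ⊓ Term.bdEqual (tInter x (tUnion t₁' t₂')) x ⊓
    Term.bdEqual (tInter x (tInter t₁' t₂')) tBot).ex

lemma isPosEx_neFormula (t₁ t₂ : LWSO.Term (α ⊕ Fin k)) : IsPosEx (neFormula t₁ t₂) :=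
  ((isPosEx_nonemptyFormula _).inf (IsPosEx.equal _ _)).inf (IsPosEx.equal _ _) |>.ex

lemma realize_neFormula (t₁ t₂ : LWSO.Term (α ⊕ Fin k)) (v : α → FinSub)
    (xs : Fin k → FinSub) :
    (neFormula t₁ t₂).Realize v xs ↔
      t₁.realize (Sum.elim v xs) ≠ t₂.realize (Sum.elim v xs) := by
  rw [Ne, Subtype.ext_iff, ← Ne, ne_iff_exists_mem_union_notMem_inter]
  simp only [neFormula, realize_ex, realize_inf, realize_nonemptyFormula, realize_bdEqual,
    Subtype.ext_iff, realize_tInter, realize_tUnion, realize_tBot, Term.realize_relabel,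
    Sum.elim_comp_map, Function.comp_id, Fin.snoc_comp_castSucc, Term.realize_var, Sum.elim_inr,
    Fin.snoc_last, inter_eq_left]
  constructor
  · rintro ⟨X, ⟨⟨x, hx⟩, hsub⟩, hdisj⟩
    exact ⟨x, hsub hx, fun h => (eq_empty_iff_forall_notMem.1 hdisj) x ⟨hx, h⟩⟩
  · rintro ⟨x, hx, hnot⟩
    exact ⟨⟨{x}, finite_singleton x⟩, ⟨singleton_nonempty x, singleton_subset_iff.2 hx⟩,
      singleton_inter_eq_empty.2 hnot⟩

end WSOFormulas

lemma posExDefinable_finSub_of_isQF {α : Type*} {k : ℕ} {φ : LWSO.BoundedFormula α k}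
    (hφ : φ.IsQF) : PosExDefinable FinSub φ := by
  refine (posExDefinable_and_not_of_isQF ?_ ?_ ?_ hφ).1
  · refine ⟨Term.bdEqual tZero tBot, IsPosEx.equal _ _, fun v xs => ?_⟩
    simp [Subtype.ext_iff]
  · exact ⟨Term.bdEqual tZero tZero, IsPosEx.equal _ _, fun v xs => by simp⟩
  · rintro _ (⟨t₁, t₂⟩ | ⟨R, _⟩)
    · exact ⟨neFormula t₁ t₂, isPosEx_neFormula t₁ t₂, fun v xs => by
        rw [BoundedFormula.realize_not, realize_neFormula, BoundedFormula.realize_bdEqual]⟩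
    · exact R.elim

/-- Every quantifier-free `L_WSO`-formula is equivalent, in every model of
`Th(WSO(𝕀))`, to a positive existential `L_WSO`-formula. -/
theorem qf_equivalent_posEx (n : ℕ) (φ : LWSO.Formula (Fin n)) (hφ : φ.IsQF) :
    ∃ ψ : LWSO.Formula (Fin n), IsPosEx ψ ∧
      ∀ (M : Type u) [LWSO.Structure M], M ⊨ LWSO.completeTheory FinSub →
        ∀ v : Fin n → M, (φ.Realize v ↔ ψ.Realize v) := by
  obtain ⟨ψ, hψ, hφψ⟩ := posExDefinable_finSub_of_isQF hφ
  exact ⟨ψ, hψ, fun M _ _ v =>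
    realize_iff_realize_of_model_completeTheory (fun v => hφψ v _) M v⟩

end MCpaper
end

section
/- For every L_L-formula φ(X₁,…,Xₙ) there is an L_WSO-formula ψ(Y₁, Z₁, …, Yₙ, Zₙ) such that for every tuple (A₁,…,Aₙ) of elements of P_fci(𝕀): L(𝕀) ⊨ φ(A₁,…,Aₙ) if and only if WSO(𝕀) ⊨ ψ(l(A₁), r(A₁), …, l(Aₙ), r(Aₙ)). -/
namespace MCpaper

open FirstOrder Language Structure Set

/-!
A finite union of closed intervals `A` is determined by its endpoints: `p ∈ A` iff some left
endpoint `y ≤ p` is followed by no right endpoint in `[y, p)`. Read backwards, the same recipe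
turns any pair of finite sets into a finite union of closed intervals, so quantifiers over
`P_fci(𝕀)` become quantifiers over pairs of finite sets. In `WSO(𝕀)` the points of `𝕀` are the
singletons, ordered by `min({i} ∪ {j}) = {i}`, so first-order statements about points, their order
and membership in finite sets are expressible. Each operation of `L_L` is first-order in
membership (`l(A)` is the set of points of `A` preceded by a gap, and so on), hence every
`L_L`-term has a formula for membership in its value, and an equation between terms says that
both sides have the same points.
-/

section LinearOrder

variable {α : Type*} [LinearOrder α]

def fromEndpoints (Y Z : Set α) : Set α :=
  {p | ∃ y ∈ Y, y ≤ p ∧ ∀ z ∈ Z, z < y ∨ p ≤ z}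

lemma exists_isLeast_of_finite {s : Set α} (hs : s.Finite) (hne : s.Nonempty) :
    ∃ a, IsLeast s a := by
  obtain ⟨a, ha, hmin⟩ := Set.exists_min_image s id hs hne
  exact ⟨a, ha, hmin⟩

lemma exists_isLeast_iUnion {ι : Type*} [Finite ι] {f : ι → Set α}
    (hf : ∀ m, (f m).Nonempty → ∃ a, IsLeast (f m) a) (hne : (⋃ m, f m).Nonempty) :
    ∃ a, IsLeast (⋃ m, f m) a := by
  set T := ⋃ m, {a | IsLeast (f m) a}
  have hT : T.Finite :=
    Set.finite_iUnion fun m => Set.Subsingleton.finite fun a ha b hb => ha.unique hb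
  obtain ⟨x, hx⟩ := hne
  obtain ⟨m₀, hm₀⟩ := Set.mem_iUnion.1 hx
  obtain ⟨a₀, ha₀⟩ := hf m₀ ⟨x, hm₀⟩
  obtain ⟨a, ha, hmin⟩ :=
    exists_isLeast_of_finite hT ⟨a₀, Set.mem_iUnion.2 ⟨m₀, ha₀⟩⟩
  obtain ⟨m, ham⟩ := Set.mem_iUnion.1 ha
  refine ⟨a, Set.mem_iUnion.2 ⟨m, ham.1⟩, fun y hy => ?_⟩
  obtain ⟨m', hm'⟩ := Set.mem_iUnion.1 hy
  obtain ⟨b, hb⟩ := hf m' ⟨y, hm'⟩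
  exact (hmin (Set.mem_iUnion.2 ⟨m', hb⟩)).trans (hb.2 hm')

lemma exists_isGreatest_iUnion {ι : Type*} [Finite ι] {f : ι → Set α}
    (hf : ∀ m, (f m).Nonempty → ∃ a, IsGreatest (f m) a) (hne : (⋃ m, f m).Nonempty) :
    ∃ a, IsGreatest (⋃ m, f m) a :=
  exists_isLeast_iUnion (α := αᵒᵈ) hf hne

lemma minSet_pair (a b : α) : minSet {a, b} = {min a b} := by
  ext x
  simp only [minSet, Set.mem_insert_iff, Set.mem_singleton_iff, forall_eq_or_imp, forall_eq,
    Set.mem_ofPred_eq]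
  constructor
  · rintro ⟨rfl | rfl, h₁, h₂⟩
    · exact (min_eq_left h₂).symm
    · exact (min_eq_right h₁).symm
  · rintro rfl
    exact ⟨min_choice a b, min_le_left a b, min_le_right a b⟩

lemma minSet_eq_self_and_nonempty_iff {s : Set α} :
    minSet s = s ∧ s.Nonempty ↔ ∃ i, s = {i} := by
  constructor
  · rintro ⟨hs, i, hi⟩
    exact ⟨i, (hs ▸ minSet_subsingleton s).eq_singleton_of_mem hi⟩
  · rintro ⟨i, rfl⟩
    simpa using minSet_pair i i

end LinearOrder

lemma isFCI_Icc (a b : II) : IsFCI (Set.Icc a b) :=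
  ⟨1, fun _ => Set.Icc a b, fun _ => Or.inl ⟨a, b, rfl⟩, by rw [Set.iUnion_const]⟩

lemma isFCI_Ici (a : II) : IsFCI (Set.Ici a) :=
  ⟨1, fun _ => Set.Ici a, fun _ => Or.inr ⟨a, rfl⟩, by rw [Set.iUnion_const]⟩

lemma IsFCI.exists_isLeast {A : Set II} (hA : IsFCI A) (hne : A.Nonempty) :
    ∃ a, IsLeast A a := by
  obtain ⟨k, f, hf, rfl⟩ := hA
  refine exists_isLeast_iUnion (fun m hm => ?_) hne
  rcases hf m with ⟨i, j, h⟩ | ⟨i, h⟩ <;> rw [h] at hm ⊢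
  · exact ⟨i, isLeast_Icc (Set.nonempty_Icc.1 hm)⟩
  · exact ⟨i, isLeast_Ici⟩

lemma IsFCI.exists_isGreatest {A : Set II} (hA : IsFCI A) (hne : A.Nonempty)
    (hbdd : BddAbove A) : ∃ a, IsGreatest A a := by
  obtain ⟨k, f, hf, rfl⟩ := hA
  refine exists_isGreatest_iUnion (fun m hm => ?_) hne
  have hbdd_m := hbdd.mono (Set.subset_iUnion f m)
  rcases hf m with ⟨i, j, h⟩ | ⟨i, h⟩ <;> rw [h] at hm hbdd_m ⊢
  · exact ⟨j, isGreatest_Icc (Set.nonempty_Icc.1 hm)⟩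
  · exact absurd hbdd_m (not_bddAbove_Ici i)

lemma eq_or_mem_lSet_of_isLeast {A : Set II} {q p y : II}
    (h : IsLeast (A ∩ Set.Icc q p) y) : y = q ∨ y ∈ lSet A := by
  rcases h.1.2.1.eq_or_lt with hqy | hqy
  · exact Or.inl hqy.symm
  refine Or.inr ⟨h.1.1, Or.inr ⟨q, hqy, Set.eq_empty_of_forall_notMem ?_⟩⟩
  rintro x ⟨⟨hqx, hxy⟩, hxA⟩
  exact (h.2 ⟨hxA, hqx.le, hxy.le.trans h.1.2.2⟩).not_gt hxy

lemma eq_or_mem_rSet_of_isGreatest {A : Set II} {y q z : II}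
    (h : IsGreatest (A ∩ Set.Icc y q) z) : z = q ∨ z ∈ rSet A := by
  rcases h.1.2.2.eq_or_lt with hzq | hzq
  · exact Or.inl hzq
  refine Or.inr ⟨h.1.1, q, hzq, Set.eq_empty_of_forall_notMem ?_⟩
  rintro x ⟨⟨hzx, hxq⟩, hxA⟩
  exact (h.2 ⟨hxA, h.1.2.1.trans hzx.le, hxq.le⟩).not_gt hzx

lemma forall_rSet_of_Icc_subset {A : Set II} {y p z : II} (h : Set.Icc y p ⊆ A)
    (hz : z ∈ rSet A) : z < y ∨ p ≤ z := by
  by_contra! hyzp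
  obtain ⟨z'', hzz'', hgap⟩ := hz.2
  obtain ⟨x, hzx, hx⟩ := exists_between (lt_min hzz'' hyzp.2)
  have hxA : x ∈ A := h ⟨hyzp.1.trans hzx.le, (hx.trans_le (min_le_right _ _)).le⟩
  exact Set.eq_empty_iff_forall_notMem.1 hgap x ⟨⟨hzx, hx.trans_le (min_le_left _ _)⟩, hxA⟩

/- A point `q ∈ [y, p]` outside `A` would give a right endpoint in `[y, p)`: the greatest point
of `A ∩ [y, q]`. -/
lemma Icc_subset_of_forall_rSet {A : Set II} (hA : IsFCI A) {y p : II} (hy : y ∈ A)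
    (h : ∀ z ∈ rSet A, z < y ∨ p ≤ z) : Set.Icc y p ⊆ A := by
  intro q hq
  by_contra hqA
  obtain ⟨z, hz⟩ := (hA.inter (isFCI_Icc y q)).exists_isGreatest ⟨y, hy, le_rfl, hq.1⟩
    ⟨q, fun x hx => hx.2.2⟩
  have hzq : z < q := lt_of_le_of_ne hz.1.2.2 fun hzq => hqA (hzq ▸ hz.1.1)
  rcases eq_or_mem_rSet_of_isGreatest hz with hzq' | hzr
  · exact hzq.ne hzq'
  rcases h z hzr with hzy | hpz
  · exact hzy.not_ge hz.1.2.1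
  · exact (hzq.trans_le hq.2).not_ge hpz

/- Take `y` the largest left endpoint below `p`: a point `q ∈ [y, p]` outside `A` would give a
larger one, the least point of `A ∩ [q, p]`. -/
lemma exists_mem_lSet_Icc_subset {A : Set II} (hA : IsFCI A) {p : II} (hp : p ∈ A) :
    ∃ y ∈ lSet A, y ≤ p ∧ Set.Icc y p ⊆ A := by
  have hleast : ∀ q ≤ p, ∃ y, IsLeast (A ∩ Set.Icc q p) y := fun q hqp =>
    (hA.inter (isFCI_Icc q p)).exists_isLeast ⟨p, hp, hqp, le_rfl⟩
  obtain ⟨y₀, hy₀⟩ := hleast 0 zero_le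
  have hy₀l : y₀ ∈ lSet A := (eq_or_mem_lSet_of_isLeast hy₀).elim
    (fun h => ⟨hy₀.1.1, Or.inl h⟩) id
  obtain ⟨y, ⟨hyl, hyp⟩, hmax⟩ := Set.exists_max_image (lSet A ∩ Set.Iic p) id
    (hA.lSet_finite.inter_of_left _) ⟨y₀, hy₀l, hy₀.1.2.2⟩
  refine ⟨y, hyl, hyp, fun q hq => ?_⟩
  by_contra hqA
  obtain ⟨y', hy'⟩ := hleast q hq.2
  rcases eq_or_mem_lSet_of_isLeast hy' with hy'q | hy'l
  · exact hqA (hy'q ▸ hy'.1.1)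
  · have hy'y : y' ≤ y := hmax y' ⟨hy'l, hy'.1.2.2⟩
    exact hqA (le_antisymm hy'.1.2.1 (hy'y.trans hq.1) ▸ hy'.1.1)

lemma IsFCI.fromEndpoints_lSet_rSet {A : Set II} (hA : IsFCI A) :
    fromEndpoints (lSet A) (rSet A) = A := by
  ext p
  constructor
  · rintro ⟨y, hy, hyp, hz⟩
    exact Icc_subset_of_forall_rSet hA hy.1 hz ⟨hyp, le_rfl⟩
  · intro hp
    obtain ⟨y, hy, hyp, hsub⟩ := exists_mem_lSet_Icc_subset hA hp
    exact ⟨y, hy, hyp, fun z hz => forall_rSet_of_Icc_subset hsub hz⟩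

lemma IsFCI.biUnion {Y : Set II} (hY : Y.Finite) {g : II → Set II}
    (hg : ∀ y ∈ Y, IsFCI (g y)) : IsFCI (⋃ y ∈ Y, g y) := by
  induction Y, hY using Set.Finite.induction_on with
  | empty => simpa using isFCI_empty
  | @insert a s _ _ ih =>
    rw [Set.biUnion_insert]
    exact (hg a (Set.mem_insert a s)).union (ih fun y hy => hg y (Set.mem_insert_of_mem a hy))

lemma isFCI_fromEndpoints_singleton (y : II) {Z : Set II} (hZ : Z.Finite) :
    IsFCI (fromEndpoints {y} Z) := by
  rcases (Z ∩ Set.Ici y).eq_empty_or_nonempty with hZy | hZy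
  · convert isFCI_Ici y using 1
    ext p
    simp only [fromEndpoints, Set.mem_singleton_iff, exists_eq_left, Set.mem_ofPred_eq,
      Set.mem_Ici, and_iff_left_iff_imp]
    intro _ z hz
    exact Or.inl (not_le.1 fun hyz => Set.eq_empty_iff_forall_notMem.1 hZy z ⟨hz, hyz⟩)
  · obtain ⟨w, hw⟩ := exists_isLeast_of_finite (hZ.inter_of_left _) hZy
    convert isFCI_Icc y w using 1
    ext p
    simp only [fromEndpoints, Set.mem_singleton_iff, exists_eq_left, Set.mem_ofPred_eq,
      Set.mem_Icc, and_congr_right_iff]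
    refine fun _ => ⟨fun h => (h w hw.1.1).resolve_left hw.1.2.not_gt, fun hpw z hz => ?_⟩
    exact (lt_or_ge z y).imp_right fun hyz => hpw.trans (hw.2 ⟨hz, hyz⟩)

lemma isFCI_fromEndpoints {Y Z : Set II} (hY : Y.Finite) (hZ : Z.Finite) :
    IsFCI (fromEndpoints Y Z) := by
  have : fromEndpoints Y Z = ⋃ y ∈ Y, fromEndpoints {y} Z := by
    ext p
    simp only [fromEndpoints, Set.mem_iUnion, Set.mem_ofPred_eq, Set.mem_singleton_iff,
      exists_eq_left, exists_prop]
  rw [this]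
  exact IsFCI.biUnion hY fun y _ => isFCI_fromEndpoints_singleton y hZ

def sing (i : II) : FinSub := ⟨{i}, Set.finite_singleton i⟩

section PointDefinable

variable {γ γ' κ κ' : Type*}

/-- The variables of `κ` range over the points of `𝕀`, represented in `WSO(𝕀)` by singletons. -/
def PointDefinable (R : (γ → FinSub) → (κ → II) → Prop) : Prop :=
  ∃ ψ : LWSO.Formula (γ ⊕ κ), ∀ v p, ψ.Realize (Sum.elim v (sing ∘ p)) ↔ R v p

variable {R S : (γ → FinSub) → (κ → II) → Prop}

lemma PointDefinable.of_iff (h : PointDefinable R) (hRS : ∀ v p, R v p ↔ S v p) :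
    PointDefinable S :=
  let ⟨ψ, hψ⟩ := h
  ⟨ψ, fun v p => (hψ v p).trans (hRS v p)⟩

lemma pointDefinable_false : PointDefinable fun (_ : γ → FinSub) (_ : κ → II) => False :=
  ⟨⊥, fun _ _ => Iff.rfl⟩

lemma PointDefinable.and (hR : PointDefinable R) (hS : PointDefinable S) :
    PointDefinable fun v p => R v p ∧ S v p :=
  let ⟨ψ, hψ⟩ := hR
  let ⟨χ, hχ⟩ := hS
  ⟨ψ ⊓ χ, fun v p => by simp [hψ, hχ]⟩

lemma PointDefinable.or (hR : PointDefinable R) (hS : PointDefinable S) :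
    PointDefinable fun v p => R v p ∨ S v p :=
  let ⟨ψ, hψ⟩ := hR
  let ⟨χ, hχ⟩ := hS
  ⟨ψ ⊔ χ, fun v p => by simp [hψ, hχ]⟩

lemma PointDefinable.imp (hR : PointDefinable R) (hS : PointDefinable S) :
    PointDefinable fun v p => R v p → S v p :=
  let ⟨ψ, hψ⟩ := hR
  let ⟨χ, hχ⟩ := hS
  ⟨ψ.imp χ, fun v p => by simp [hψ, hχ]⟩

lemma PointDefinable.not (hR : PointDefinable R) : PointDefinable fun v p => ¬R v p :=
  hR.imp pointDefinable_false

lemma PointDefinable.comp (h : PointDefinable R) (f : γ → γ') (g : κ → κ') :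
    PointDefinable fun v p => R (v ∘ f) (p ∘ g) :=
  let ⟨ψ, hψ⟩ := h
  ⟨ψ.relabel (Sum.map f g), fun v p => by simp [Sum.elim_comp_map, hψ, Function.comp_assoc]⟩

lemma PointDefinable.exists_param {ι : Type*} [Finite ι]
    {R : (γ ⊕ ι → FinSub) → (κ → II) → Prop} (h : PointDefinable R) :
    PointDefinable fun v p => ∃ w : ι → FinSub, R (Sum.elim v w) p := by
  obtain ⟨ψ, hψ⟩ := h
  refine ⟨(ψ.relabel (Sum.elim (Sum.map Sum.inl id) (Sum.inl ∘ Sum.inr))).iExs ι,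
    fun v p => ?_⟩
  simp only [Formula.realize_iExs, Formula.realize_relabel, ← hψ]
  refine exists_congr fun w => iff_of_eq (congrArg _ ?_)
  funext x
  rcases x with (x | x) | x <;> rfl

lemma PointDefinable.forall_param {ι : Type*} [Finite ι]
    {R : (γ ⊕ ι → FinSub) → (κ → II) → Prop} (h : PointDefinable R) :
    PointDefinable fun v p => ∀ w : ι → FinSub, R (Sum.elim v w) p :=
  h.not.exists_param.not.of_iff fun _ _ => not_exists_not

lemma pointDefinable_exists_eq_sing (x : γ) :
    PointDefinable fun v (_ : κ → II) => ∃ i, v x = sing i := by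
  refine ⟨(Functions.apply₁ (L := LWSO) WSOFunc.min (var (Sum.inl x))).equal (var (Sum.inl x))
    ⊓ ∼((var (Sum.inl x)).equal (Constants.term (L := LWSO) WSOFunc.bot)), fun v p => ?_⟩
  simp only [Formula.realize_inf, Formula.realize_not, Formula.realize_equal, Subtype.ext_iff]
  change minSet (v x).1 = (v x).1 ∧ ¬(v x).1 = ∅ ↔ _
  rw [← Set.not_nonempty_iff_eq_empty, not_not]
  exact minSet_eq_self_and_nonempty_iff

-- Trades a point variable for a parameter constrained to be a singleton.
lemma PointDefinable.exists_eq_sing_and {R : (γ → FinSub) → (κ ⊕ Unit → II) → Prop}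
    (h : PointDefinable R) :
    PointDefinable fun (v : γ ⊕ Unit → FinSub) p =>
      ∃ i, v (Sum.inr ()) = sing i ∧ R (v ∘ Sum.inl) (Sum.elim p fun _ => i) := by
  obtain ⟨σ, hσ⟩ := pointDefinable_exists_eq_sing (γ := γ ⊕ Unit) (κ := κ) (Sum.inr ())
  obtain ⟨ψ, hψ⟩ := h
  set e : γ ⊕ (κ ⊕ Unit) → (γ ⊕ Unit) ⊕ κ :=
    Sum.elim (Sum.inl ∘ Sum.inl) (Sum.elim Sum.inr fun _ => Sum.inl (Sum.inr ()))
  refine ⟨σ ⊓ ψ.relabel e, fun v p => ?_⟩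
  have he : ∀ i, v (Sum.inr ()) = sing i →
      Sum.elim v (sing ∘ p) ∘ e =
        Sum.elim (v ∘ Sum.inl) (sing ∘ Sum.elim p fun _ => i) := by
    intro i hi
    funext x
    rcases x with x | x | x
    exacts [rfl, rfl, hi]
  rw [Formula.realize_inf, hσ, Formula.realize_relabel]
  constructor
  · rintro ⟨⟨i, hi⟩, hR⟩
    exact ⟨i, hi, (hψ _ _).1 (he i hi ▸ hR)⟩
  · rintro ⟨i, hi, hR⟩
    exact ⟨⟨i, hi⟩, he i hi ▸ (hψ _ _).2 hR⟩

lemma PointDefinable.exists_point {R : (γ → FinSub) → (κ ⊕ Unit → II) → Prop}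
    (h : PointDefinable R) : PointDefinable fun v p => ∃ i, R v (Sum.elim p fun _ => i) :=
  h.exists_eq_sing_and.exists_param.of_iff fun _ _ =>
    ⟨fun ⟨_, i, _, hR⟩ => ⟨i, hR⟩, fun ⟨i, hR⟩ => ⟨fun _ => sing i, i, rfl, hR⟩⟩

lemma PointDefinable.forall_point {R : (γ → FinSub) → (κ ⊕ Unit → II) → Prop}
    (h : PointDefinable R) : PointDefinable fun v p => ∀ i, R v (Sum.elim p fun _ => i) :=
  h.not.exists_point.not.of_iff fun _ _ => not_exists_not

lemma pointDefinable_le (a b : κ) : PointDefinable fun (_ : γ → FinSub) p => p a ≤ p b := by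
  refine ⟨(Functions.apply₁ (L := LWSO) WSOFunc.min
    (Functions.apply₂ (L := LWSO) WSOFunc.union (var (Sum.inr a)) (var (Sum.inr b)))).equal
      (var (Sum.inr a)), fun v p => ?_⟩
  simp only [Formula.realize_equal, Subtype.ext_iff]
  change minSet ({p a} ∪ {p b}) = {p a} ↔ _
  rw [Set.singleton_union, minSet_pair, Set.singleton_eq_singleton_iff, min_eq_left_iff]

lemma pointDefinable_lt (a b : κ) : PointDefinable fun (_ : γ → FinSub) p => p a < p b :=
  (pointDefinable_le b a).not.of_iff fun _ _ => not_le

lemma pointDefinable_eq_zero (a : κ) : PointDefinable fun (_ : γ → FinSub) p => p a = 0 := by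
  refine ⟨(var (Sum.inr a)).equal (Constants.term (L := LWSO) WSOFunc.zero), fun v p => ?_⟩
  simp only [Formula.realize_equal, Subtype.ext_iff]
  exact Set.singleton_eq_singleton_iff

lemma pointDefinable_mem (a : κ) (x : γ) : PointDefinable fun v p => p a ∈ (v x).1 := by
  refine ⟨(Functions.apply₂ (L := LWSO) WSOFunc.inter (var (Sum.inr a)) (var (Sum.inl x))).equal
    (var (Sum.inr a)), fun v p => ?_⟩
  simp only [Formula.realize_equal, Subtype.ext_iff]
  change {p a} ∩ (v x).1 = {p a} ↔ _
  rw [Set.inter_eq_left, Set.singleton_subset_iff]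

end PointDefinable

section PointSetDefinable

variable {γ κ : Type*}

def PointSetDefinable (S : (γ → FinSub) → Set II) : Prop :=
  PointDefinable fun v (p : Unit → II) => p () ∈ S v

variable {S T : (γ → FinSub) → Set II}

lemma PointSetDefinable.mem_at (h : PointSetDefinable S) (a : κ) :
    PointDefinable fun v p => p a ∈ S v :=
  h.comp id fun _ => a

lemma PointSetDefinable.eq (hS : PointSetDefinable S) (hT : PointSetDefinable T) :
    PointDefinable fun v (_ : κ → II) => S v = T v :=
  (((hS.mem_at (Sum.inr ())).imp (hT.mem_at (Sum.inr ()))).and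
    ((hT.mem_at (Sum.inr ())).imp (hS.mem_at (Sum.inr ())))).forall_point.of_iff fun _ _ => by
      simp only [Set.ext_iff, iff_def, Sum.elim_inr]

lemma pointSetDefinable_empty : PointSetDefinable fun (_ : γ → FinSub) => (∅ : Set II) :=
  pointDefinable_false

lemma pointSetDefinable_zero : PointSetDefinable fun (_ : γ → FinSub) => ({0} : Set II) :=
  pointDefinable_eq_zero ()

lemma PointSetDefinable.union (hS : PointSetDefinable S) (hT : PointSetDefinable T) :
    PointSetDefinable fun v => S v ∪ T v :=
  PointDefinable.or hS hT

lemma PointSetDefinable.inter (hS : PointSetDefinable S) (hT : PointSetDefinable T) :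
    PointSetDefinable fun v => S v ∩ T v :=
  PointDefinable.and hS hT

lemma PointSetDefinable.minSet (hS : PointSetDefinable S) :
    PointSetDefinable fun v => minSet (S v) :=
  PointDefinable.and hS
    ((hS.mem_at (Sum.inr ())).imp (pointDefinable_le (Sum.inl ()) (Sum.inr ()))).forall_point

lemma PointSetDefinable.maxSet (hS : PointSetDefinable S) :
    PointSetDefinable fun v => maxSet (S v) :=
  PointDefinable.and hS
    ((hS.mem_at (Sum.inr ())).imp (pointDefinable_le (Sum.inr ()) (Sum.inl ()))).forall_point

lemma PointSetDefinable.lSet (hS : PointSetDefinable S) :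
    PointSetDefinable fun v => lSet (S v) := by
  have hgap := (pointDefinable_lt (Sum.inl (Sum.inr ())) (Sum.inr ())).imp
    ((pointDefinable_lt (Sum.inr ()) (Sum.inl (Sum.inl ()))).imp
      (hS.mem_at (Sum.inr ())).not)
  refine (PointDefinable.and hS ((pointDefinable_eq_zero ()).or
    ((pointDefinable_lt (Sum.inr ()) (Sum.inl ())).and hgap.forall_point).exists_point)).of_iff
    fun v p => ?_
  simp only [MCpaper.lSet, Set.mem_sep_iff, Set.eq_empty_iff_forall_notMem, Set.mem_inter_iff,
    Set.mem_Ioo, Sum.elim_inl, Sum.elim_inr, not_and, and_imp]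

lemma PointSetDefinable.rSet (hS : PointSetDefinable S) :
    PointSetDefinable fun v => rSet (S v) := by
  have hgap := (pointDefinable_lt (Sum.inl (Sum.inl ())) (Sum.inr ())).imp
    ((pointDefinable_lt (Sum.inr ()) (Sum.inl (Sum.inr ()))).imp
      (hS.mem_at (Sum.inr ())).not)
  refine (PointDefinable.and hS
    ((pointDefinable_lt (Sum.inl ()) (Sum.inr ())).and hgap.forall_point).exists_point).of_iff
    fun v p => ?_
  simp only [MCpaper.rSet, Set.mem_sep_iff, Set.eq_empty_iff_forall_notMem, Set.mem_inter_iff,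
    Set.mem_Ioo, Sum.elim_inl, Sum.elim_inr, not_and, and_imp]

lemma pointSetDefinable_fromEndpoints (a b : γ) :
    PointSetDefinable fun v => fromEndpoints (v a).1 (v b).1 := by
  have hz := (pointDefinable_mem (Sum.inr ()) b).imp
    ((pointDefinable_lt (Sum.inr ()) (Sum.inl (Sum.inr ()))).or
      (pointDefinable_le (Sum.inl (Sum.inl ())) (Sum.inr ())))
  refine ((pointDefinable_mem (Sum.inr ()) a).and
    ((pointDefinable_le (Sum.inr ()) (Sum.inl ())).and hz.forall_point)).exists_point.of_iff
    fun v p => ?_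
  simp only [fromEndpoints, Set.mem_ofPred_eq, Sum.elim_inl, Sum.elim_inr]

end PointSetDefinable

section Interpretable

variable {β β' : Type*}

def endpoints (A : β → FCI) : β ⊕ β → FinSub :=
  Sum.elim (fun x => ⟨lSet (A x).1, (A x).2.lSet_finite⟩)
    (fun x => ⟨rSet (A x).1, (A x).2.rSet_finite⟩)

def decode (v : β ⊕ β → FinSub) (x : β) : FCI :=
  ⟨fromEndpoints (v (Sum.inl x)).1 (v (Sum.inr x)).1, isFCI_fromEndpoints (v _).2 (v _).2⟩

lemma decode_endpoints (A : β → FCI) : decode (endpoints A) = A :=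
  funext fun x => Subtype.ext (A x).2.fromEndpoints_lSet_rSet

lemma pointSetDefinable_term_realize (t : LL.Term β) :
    PointSetDefinable fun v => (t.realize (decode v)).1 := by
  induction t with
  | var x => exact pointSetDefinable_fromEndpoints (Sum.inl x) (Sum.inr x)
  | func f ts ih =>
    cases f with
    | union => exact (ih 0).union (ih 1)
    | inter => exact (ih 0).inter (ih 1)
    | bot => exact pointSetDefinable_empty
    | zero => exact pointSetDefinable_zero
    | min => exact (ih 0).minSet
    | max => exact (ih 0).maxSet
    | left => exact (ih 0).lSet
    | right => exact (ih 0).rSet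

/-- Each `A x` is coded by its pair of endpoint sets. Since `decode` is defined on every pair of
finite sets, a quantifier over `P_fci(𝕀)` becomes one over pairs (`Interpretable.forall`). -/
def Interpretable (P : (β → FCI) → Prop) : Prop :=
  PointDefinable fun (v : β ⊕ β → FinSub) (_ : Empty → II) => P (decode v)

lemma interpretable_eq (t₁ t₂ : LL.Term β) :
    Interpretable fun A => t₁.realize A = t₂.realize A :=
  ((pointSetDefinable_term_realize t₁).eq (pointSetDefinable_term_realize t₂)).of_iff fun _ _ =>
    Subtype.ext_iff.symm

lemma Interpretable.comp {P : (β → FCI) → Prop} (h : Interpretable P) (f : β → β') :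
    Interpretable fun A => P (A ∘ f) :=
  PointDefinable.comp h (Sum.map f f) id

lemma Interpretable.forall {P : (β ⊕ Unit → FCI) → Prop} (h : Interpretable P) :
    Interpretable fun A => ∀ B, P (Sum.elim A fun _ => B) := by
  refine (PointDefinable.comp h (Equiv.sumSumSumComm β Unit β Unit) id).forall_param.of_iff
    fun v _ => ?_
  have hdecode : ∀ w : Unit ⊕ Unit → FinSub,
      decode (Sum.elim v w ∘ Equiv.sumSumSumComm β Unit β Unit) =
        Sum.elim (decode v) fun _ => decode w () := by
    intro w
    funext x
    rcases x with x | x <;> rfl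
  simp only [hdecode]
  refine ⟨fun hP B => ?_, fun hP w => hP _⟩
  simpa only [decode_endpoints] using hP (endpoints fun _ : Unit => B)

lemma interpretable_boundedFormula_realize {α : Type*} {m : ℕ} (φ : LL.BoundedFormula α m) :
    Interpretable fun A : α ⊕ Fin m → FCI => φ.Realize (A ∘ Sum.inl) (A ∘ Sum.inr) := by
  induction φ with
  | falsum => exact pointDefinable_false
  | equal t₁ t₂ =>
    exact (interpretable_eq t₁ t₂).of_iff fun v _ => by
      change _ = _ ↔ t₁.realize (Sum.elim _ _) = t₂.realize (Sum.elim _ _)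
      rw [Sum.elim_comp_inl_inr]
  | rel R => exact R.elim
  | imp _ _ ih₁ ih₂ => exact PointDefinable.imp ih₁ ih₂
  | all _ ih =>
    refine ((ih.comp (Sum.elim (Sum.inl ∘ Sum.inl)
      (Fin.lastCases (Sum.inr ()) (Sum.inl ∘ Sum.inr)))).forall).of_iff fun v _ => ?_
    refine forall_congr' fun B => iff_of_eq (congrArg _ ?_)
    funext j
    induction j using Fin.lastCases <;> simp

lemma interpretable_formula_realize {α : Type*} (φ : LL.Formula α) :
    Interpretable fun A : α → FCI => φ.Realize A :=
  ((interpretable_boundedFormula_realize φ).comp (Sum.elim id finZeroElim)).of_iff fun _ _ =>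
    iff_of_eq (congrArg _ (Subsingleton.elim _ _))

lemma Interpretable.exists_formula {P : (β → FCI) → Prop} (h : Interpretable P) :
    ∃ ψ : LWSO.Formula (β ⊕ β), ∀ A, ψ.Realize (endpoints A) ↔ P A := by
  obtain ⟨ψ, hψ⟩ := h
  refine ⟨ψ.relabel (Sum.elim id Empty.elim), fun A => ?_⟩
  have hA := hψ (endpoints A) Empty.elim
  simp only [decode_endpoints] at hA
  rw [Formula.realize_relabel, ← hA]
  refine iff_of_eq (congrArg _ (funext fun x => ?_))
  rcases x with x | x
  exacts [rfl, x.elim]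

end Interpretable

universe u v

/-- For every `L_L`-formula `φ(X₁,…,Xₙ)` there is an `L_WSO`-formula
`ψ(Y₁, Z₁, …, Yₙ, Zₙ)` such that for every tuple `(A₁,…,Aₙ)` of elements of `P_fci(𝕀)`:
`L(𝕀) ⊨ φ(A₁,…,Aₙ)` iff `WSO(𝕀) ⊨ ψ(l(A₁), r(A₁), …, l(Aₙ), r(Aₙ))`. -/
theorem L_interpreted_in_WSO (n : ℕ) (φ : LL.Formula (Fin n)) :
    ∃ ψ : LWSO.Formula (Fin n ⊕ Fin n),
      ∀ (A : Fin n → FCI)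
        (hl : ∀ i, (lSet (A i).1).Finite) (hr : ∀ i, (rSet (A i).1).Finite),
        (φ.Realize A ↔
          ψ.Realize (Sum.elim (fun i => (⟨lSet (A i).1, hl i⟩ : FinSub))
            (fun i => (⟨rSet (A i).1, hr i⟩ : FinSub)))) := by
  obtain ⟨ψ, hψ⟩ := (interpretable_formula_realize φ).exists_formula
  exact ⟨ψ, fun A _ _ => (hψ A).symm⟩

end MCpaper
end
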